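/- arXiv:2104.01189 — 15 statements merged into one kernel-verified Lean document; each statement's English description precedes it below -/
import Mathlib

section
/- Lemma 4.1: If the transition system of a program is non-terminating (some run from an initial configuration never visits a configuration at location ℓ_out), then there exist a proper under-approximation StepU of Step and a set C of configurations that is a closed recurrence set with respect to StepU. -/
/-- Lemma 4.1: non-termination implies the existence of a proper
under-approximation together with a closed recurrence set. -/
theorem nonterm_exists_proper_underapprox_and_closed_recurrence_set
    {L : Type*} {n : ℕ} (ℓ_init ℓ_out : L)
    (Θ_init : Set (Fin n → ℤ))
    (Step : (L × (Fin n → ℤ)) → (L × (Fin n → ℤ)) → Prop)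
    (hTotal : ∀ c, ∃ c', Step c c')
    (hOut : ∀ c c', c.1 = ℓ_out → Step c c' → c'.1 = ℓ_out)
    (hNonterm : ∃ ρ : ℕ → L × (Fin n → ℤ),
      (∃ x ∈ Θ_init, ρ 0 = (ℓ_init, x)) ∧
      (∀ i, Step (ρ i) (ρ (i + 1))) ∧ (∀ i, (ρ i).1 ≠ ℓ_out)) :
    ∃ (StepU : (L × (Fin n → ℤ)) → (L × (Fin n → ℤ)) → Prop)
      (C : Set (L × (Fin n → ℤ))),
      (∀ c c', StepU c c' → Step c c') ∧
      (∀ c, (∃ c', Step c c') → ∃ c', StepU c c') ∧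
      (∃ x ∈ Θ_init, ((ℓ_init, x) : L × (Fin n → ℤ)) ∈ C) ∧
      (∀ c ∈ C, ∃ c', StepU c c' ∧ c' ∈ C) ∧
      (∀ c ∈ C, ∀ c', StepU c c' → c' ∈ C) ∧
      (∀ c ∈ C, c.1 ≠ ℓ_out) := by
  obtain ⟨ρ, ⟨x, hx, h0⟩, hstep, hnot⟩ := hNonterm
  classical
  refine ⟨fun c c' => (∃ i, c = ρ i ∧ c' = ρ (i + 1)) ∨
      ((∀ i, c ≠ ρ i) ∧ c' = Classical.choose (hTotal c)),
    Set.range ρ, ?_, ?_, ?_, ?_, ?_, ?_⟩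
  · rintro c c' (⟨i, rfl, rfl⟩ | ⟨_, rfl⟩)
    · exact hstep i
    · exact Classical.choose_spec (hTotal c)
  · intro c _
    by_cases h : ∃ i, c = ρ i
    · obtain ⟨i, rfl⟩ := h
      exact ⟨ρ (i + 1), Or.inl ⟨i, rfl, rfl⟩⟩
    · exact ⟨_, Or.inr ⟨fun i hi => h ⟨i, hi⟩, rfl⟩⟩
  · exact ⟨x, hx, ⟨0, h0⟩⟩
  · rintro c ⟨i, rfl⟩
    exact ⟨ρ (i + 1), Or.inl ⟨i, rfl, rfl⟩, ⟨i + 1, rfl⟩⟩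
  · rintro c ⟨i, rfl⟩ c' (⟨j, _, rfl⟩ | ⟨h, _⟩)
    · exact ⟨j + 1, rfl⟩
    · exact absurd rfl (h i)
  · rintro c ⟨i, rfl⟩
    exact hnot i
end

section
/- Construction in the proof of Lemma 4.1: Let StepU' be an under-approximation of Step and let C be a closed recurrence set with respect to StepU'. Define the relation StepU by StepU c c' ↔ StepU' c c' ∨ (Step c c' ∧ c ∉ C). Then StepU is a proper under-approximation of Step and C is a closed recurrence set with respect to StepU. -/
/-- Construction in the proof of Lemma 4.1. -/
theorem extended_underapprox_is_proper_and_keeps_closed_recurrence_set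
    {L : Type*} {n : ℕ} (ℓ_init ℓ_out : L)
    (Θ_init : Set (Fin n → ℤ))
    (Step : (L × (Fin n → ℤ)) → (L × (Fin n → ℤ)) → Prop)
    (hTotal : ∀ c, ∃ c', Step c c')
    (StepU' : (L × (Fin n → ℤ)) → (L × (Fin n → ℤ)) → Prop)
    (hUnder' : ∀ c c', StepU' c c' → Step c c')
    (C : Set (L × (Fin n → ℤ)))
    (hCinit : ∃ x ∈ Θ_init, ((ℓ_init, x) : L × (Fin n → ℤ)) ∈ C)
    (hCsucc : ∀ c ∈ C, ∃ c', StepU' c c' ∧ c' ∈ C)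
    (hCind : ∀ c ∈ C, ∀ c', StepU' c c' → c' ∈ C)
    (hCout : ∀ c ∈ C, c.1 ≠ ℓ_out) :
    (∀ c c', (StepU' c c' ∨ (Step c c' ∧ c ∉ C)) → Step c c') ∧
    (∀ c, (∃ c', Step c c') →
      ∃ c', StepU' c c' ∨ (Step c c' ∧ c ∉ C)) ∧
    (∃ x ∈ Θ_init, ((ℓ_init, x) : L × (Fin n → ℤ)) ∈ C) ∧
    (∀ c ∈ C, ∃ c', (StepU' c c' ∨ (Step c c' ∧ c ∉ C)) ∧ c' ∈ C) ∧
    (∀ c ∈ C, ∀ c', (StepU' c c' ∨ (Step c c' ∧ c ∉ C)) → c' ∈ C) ∧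
    (∀ c ∈ C, c.1 ≠ ℓ_out) := by
  refine ⟨?_, ?_, hCinit, ?_, ?_, hCout⟩
  · rintro c c' (h | ⟨h, _⟩)
    · exact hUnder' c c' h
    · exact h
  · intro c ⟨c', hc'⟩
    by_cases hc : c ∈ C
    · obtain ⟨d, hd, _⟩ := hCsucc c hc
      exact ⟨d, Or.inl hd⟩
    · exact ⟨c', Or.inr ⟨hc', hc⟩⟩
  · intro c hc
    obtain ⟨d, hd, hdC⟩ := hCsucc c hc
    exact ⟨d, Or.inl hd, hdC⟩
  · rintro c hc c' (h | ⟨_, hnc⟩)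
    · exact hCind c hc c' h
    · exact absurd hc hnc
end

section
/- Soundness of the BI-certificate (Theorem 4.2): If the transition system of a program admits a BI-certificate (StepU, BI, Θ), then the system is non-terminating, i.e. there exists a run from an initial configuration that never visits a configuration at location ℓ_out. -/
/-- Soundness of the BI-certificate (Theorem 4.2). -/
theorem BI_certificate_sound {L : Type*} {n : ℕ} (ℓ_init ℓ_out : L)
    (Θ_init : Set (Fin n → ℤ))
    (Step StepU : (L × (Fin n → ℤ)) → (L × (Fin n → ℤ)) → Prop)
    (BI : Set (L × (Fin n → ℤ))) (Θ : Set (Fin n → ℤ))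
    (hTotal : ∀ c, ∃ c', Step c c')
    (hOut : ∀ c c', c.1 = ℓ_out → Step c c' → c'.1 = ℓ_out)
    (hUnder : ∀ c c', StepU c c' → Step c c')
    (hProper : ∀ c, (∃ c', Step c c') → ∃ c', StepU c c')
    (hΘ : ∀ x : Fin n → ℤ,
      (∃ x₀ ∈ Θ_init, Relation.ReflTransGen Step (ℓ_init, x₀) (ℓ_out, x)) → x ∈ Θ)
    (hBIind : ∀ c c', c ∈ BI → flip StepU c c' → c' ∈ BI)
    (hBIout : ∀ x ∈ Θ, ((ℓ_out, x) : L × (Fin n → ℤ)) ∈ BI)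
    (hNotInv : ∃ c, (∃ x₀ ∈ Θ_init, Relation.ReflTransGen Step (ℓ_init, x₀) c) ∧ c ∉ BI) :
    ∃ ρ : ℕ → L × (Fin n → ℤ),
      (∃ x ∈ Θ_init, ρ 0 = (ℓ_init, x)) ∧
      (∀ i, Step (ρ i) (ρ (i + 1))) ∧ (∀ i, (ρ i).1 ≠ ℓ_out) := by
  obtain ⟨c, ⟨x₀, hx₀, hreach⟩, hcBI⟩ := hNotInv
  -- tail run from c via StepU
  let τ : ℕ → L × (Fin n → ℤ) := fun k => Nat.rec c
    (fun _ p => Classical.choose (hProper p (hTotal p))) k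
  have hτ0 : τ 0 = c := rfl
  have hτstep : ∀ k, StepU (τ k) (τ (k + 1)) := fun k =>
    Classical.choose_spec (hProper (τ k) (hTotal (τ k)))
  have hinv : ∀ k, τ k ∉ BI ∧ Relation.ReflTransGen Step (ℓ_init, x₀) (τ k) := by
    intro k
    induction k with
    | zero => exact ⟨hcBI, hreach⟩
    | succ k ih =>
      refine ⟨fun h => ih.1 (hBIind _ _ h (hτstep k)), ih.2.tail (hUnder _ _ (hτstep k))⟩
  have hτout : ∀ k, (τ k).1 ≠ ℓ_out := by
    intro k hk
    obtain ⟨hnBI, hr⟩ := hinv k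
    have : τ k = (ℓ_out, (τ k).2) := by
      rw [← hk]
    exact hnBI (by rw [this]; exact hBIout _ (hΘ _ ⟨x₀, hx₀, this ▸ hr⟩))
  -- build full run by head induction on reachability
  have key : ∀ a, Relation.ReflTransGen Step a c →
      ∃ ρ : ℕ → L × (Fin n → ℤ), ρ 0 = a ∧
        (∀ i, Step (ρ i) (ρ (i + 1))) ∧ (∀ i, (ρ i).1 ≠ ℓ_out) := by
    intro a h
    induction h using Relation.ReflTransGen.head_induction_on with
    | refl =>
      exact ⟨τ, hτ0, fun i => hUnder _ _ (hτstep i), hτout⟩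
    | head hab _ ih =>
      rename_i a' b' _
      obtain ⟨ρ, hρ0, hρstep, hρout⟩ := ih
      refine ⟨fun i => Nat.casesOn i a' (fun j => ρ j), rfl, ?_, ?_⟩
      · intro i
        cases i with
        | zero => simpa [hρ0] using hab
        | succ j => exact hρstep j
      · intro i
        cases i with
        | zero =>
          intro h0
          exact hρout 0 (by rw [hρ0]; exact hOut _ _ h0 hab)
        | succ j => exact hρout j
  obtain ⟨ρ, hρ0, hρstep, hρout⟩ := key _ hreach
  exact ⟨ρ, ⟨x₀, hx₀, hρ0⟩, hρstep, hρout⟩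
end

section
/- Complete characterization of non-termination (Theorem 4.3): If the transition system of a program is non-terminating, then there exist a proper under-approximation StepU of Step and a set BI of configurations such that: BI is inductive with respect to flip StepU; BI contains every configuration whose location is ℓ_out; and BI is not an invariant of the original system, i.e. some reachable configuration lies outside BI. (That is, (StepU, BI, Θ) with Θ the set of all valuations is a BI-certificate.) -/
/-- Complete characterization of non-termination (Theorem 4.3). -/
theorem nonterm_admits_BI_certificate {L : Type*} {n : ℕ} (ℓ_init ℓ_out : L)
    (Θ_init : Set (Fin n → ℤ))
    (Step : (L × (Fin n → ℤ)) → (L × (Fin n → ℤ)) → Prop)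
    (hTotal : ∀ c, ∃ c', Step c c')
    (hOut : ∀ c c', c.1 = ℓ_out → Step c c' → c'.1 = ℓ_out)
    (hNonterm : ∃ ρ : ℕ → L × (Fin n → ℤ),
      (∃ x ∈ Θ_init, ρ 0 = (ℓ_init, x)) ∧
      (∀ i, Step (ρ i) (ρ (i + 1))) ∧ (∀ i, (ρ i).1 ≠ ℓ_out)) :
    ∃ (StepU : (L × (Fin n → ℤ)) → (L × (Fin n → ℤ)) → Prop)
      (BI : Set (L × (Fin n → ℤ))),
      (∀ c c', StepU c c' → Step c c') ∧
      (∀ c, (∃ c', Step c c') → ∃ c', StepU c c') ∧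
      (∀ c c', c ∈ BI → flip StepU c c' → c' ∈ BI) ∧
      (∀ c : L × (Fin n → ℤ), c.1 = ℓ_out → c ∈ BI) ∧
      (∃ c, (∃ x ∈ Θ_init, Relation.ReflTransGen Step (ℓ_init, x) c) ∧ c ∉ BI) := by
  classical
  obtain ⟨ρ, ⟨x, hx, hρ0⟩, hstep, hnout⟩ := hNonterm
  set next : (L × (Fin n → ℤ)) → (L × (Fin n → ℤ)) := fun c =>
    if h : ∃ i, ρ i = c then ρ (h.choose + 1) else (hTotal c).choose with hnext
  refine ⟨fun c c' => c' = next c, {c | ∀ i, ρ i ≠ c}, ?_, ?_, ?_, ?_, ?_⟩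
  · intro c c' hc
    subst hc
    by_cases h : ∃ i, ρ i = c
    · simp only [hnext, dif_pos h]
      have := hstep h.choose
      rwa [h.choose_spec] at this
    · simp only [hnext, dif_neg h]
      exact (hTotal c).choose_spec
  · intro c _
    exact ⟨next c, rfl⟩
  · intro c c' hc hcc'
    have hcc' : c = next c' := hcc'
    intro i hi
    have h : ∃ j, ρ j = c' := ⟨i, hi⟩
    have : next c' = ρ (h.choose + 1) := dif_pos h
    exact hc _ (hcc'.trans this).symm
  · intro c hc i hi
    exact hnout i (hi ▸ hc)
  · exact ⟨ρ 0, ⟨x, hx, by rw [hρ0]⟩, fun h => h 0 rfl⟩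
end

section
/- Soundness of Check 1 of the algorithm (part of Theorem 5.1): Let StepU be a proper under-approximation of Step and let S be a set of configurations such that S is inductive with respect to StepU, S contains an initial configuration c, and no configuration of S is at location ℓ_out. Then every run from c in the restricted system StepU never visits a configuration at location ℓ_out, at least one such run exists, and consequently the original system is non-terminating. -/
/-- Soundness of Check 1 of the algorithm (part of Theorem 5.1). -/
theorem check1_sound {L : Type*} {n : ℕ} (ℓ_init ℓ_out : L)
    (Θ_init : Set (Fin n → ℤ))
    (Step StepU : (L × (Fin n → ℤ)) → (L × (Fin n → ℤ)) → Prop)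
    (hTotal : ∀ c, ∃ c', Step c c')
    (hUnder : ∀ c c', StepU c c' → Step c c')
    (hProper : ∀ c, (∃ c', Step c c') → ∃ c', StepU c c')
    (S : Set (L × (Fin n → ℤ)))
    (hSind : ∀ c ∈ S, ∀ c', StepU c c' → c' ∈ S)
    (x : Fin n → ℤ) (hx : x ∈ Θ_init)
    (hcS : ((ℓ_init, x) : L × (Fin n → ℤ)) ∈ S)
    (hSout : ∀ c ∈ S, c.1 ≠ ℓ_out) :
    (∀ ρ : ℕ → L × (Fin n → ℤ), ρ 0 = (ℓ_init, x) →
      (∀ i, StepU (ρ i) (ρ (i + 1))) → ∀ i, (ρ i).1 ≠ ℓ_out) ∧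
    (∃ ρ : ℕ → L × (Fin n → ℤ), ρ 0 = (ℓ_init, x) ∧
      ∀ i, StepU (ρ i) (ρ (i + 1))) ∧
    (∃ ρ : ℕ → L × (Fin n → ℤ),
      (∃ x' ∈ Θ_init, ρ 0 = (ℓ_init, x')) ∧
      (∀ i, Step (ρ i) (ρ (i + 1))) ∧ (∀ i, (ρ i).1 ≠ ℓ_out)) := by
  have hU : ∀ c, ∃ c', StepU c c' := fun c => hProper c (hTotal c)
  have hinS : ∀ (ρ : ℕ → L × (Fin n → ℤ)), ρ 0 = (ℓ_init, x) →
      (∀ i, StepU (ρ i) (ρ (i + 1))) → ∀ i, ρ i ∈ S := by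
    intro ρ h0 hs i
    induction i with
    | zero => rw [h0]; exact hcS
    | succ k ih => exact hSind _ ih _ (hs k)
  have h1 : ∀ ρ : ℕ → L × (Fin n → ℤ), ρ 0 = (ℓ_init, x) →
      (∀ i, StepU (ρ i) (ρ (i + 1))) → ∀ i, (ρ i).1 ≠ ℓ_out :=
    fun ρ h0 hs i => hSout _ (hinS ρ h0 hs i)
  have h2 : ∃ ρ : ℕ → L × (Fin n → ℤ), ρ 0 = (ℓ_init, x) ∧
      ∀ i, StepU (ρ i) (ρ (i + 1)) := by
    let f : ℕ → L × (Fin n → ℤ) := fun i =>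
      Nat.rec (ℓ_init, x) (fun _ c => Classical.choose (hU c)) i
    exact ⟨f, rfl, fun i => Classical.choose_spec (hU (f i))⟩
  refine ⟨h1, h2, ?_⟩
  obtain ⟨ρ, h0, hs⟩ := h2
  exact ⟨ρ, ⟨x, hx, h0⟩, fun i => hUnder _ _ (hs i), h1 ρ h0 hs⟩
end

section
/- Soundness of Check 2 of the algorithm (part of Theorem 5.1): Let Ĩ be a set of configurations that is inductive with respect to Step and contains all initial configurations, let Θ := {x : (ℓ_out, x) ∈ Ĩ}, let StepU be a proper under-approximation of Step, and let BI be a set of configurations that is inductive with respect to flip StepU and contains every configuration (ℓ_out, x) with x ∈ Θ. If some configuration reachable in the original system lies outside BI, then the original system is non-terminating, i.e. there exists a run from an initial configuration that never visits a configuration at location ℓ_out. -/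
/-- Soundness of Check 2 of the algorithm (part of Theorem 5.1). -/
theorem check2_sound {L : Type*} {n : ℕ} (ℓ_init ℓ_out : L)
    (Θ_init : Set (Fin n → ℤ))
    (Step StepU : (L × (Fin n → ℤ)) → (L × (Fin n → ℤ)) → Prop)
    (hTotal : ∀ c, ∃ c', Step c c')
    (hOut : ∀ c c', c.1 = ℓ_out → Step c c' → c'.1 = ℓ_out)
    (Itilde : Set (L × (Fin n → ℤ)))
    (hIind : ∀ c c', c ∈ Itilde → Step c c' → c' ∈ Itilde)
    (hIinit : ∀ x ∈ Θ_init, ((ℓ_init, x) : L × (Fin n → ℤ)) ∈ Itilde)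
    (hUnder : ∀ c c', StepU c c' → Step c c')
    (hProper : ∀ c, (∃ c', Step c c') → ∃ c', StepU c c')
    (BI : Set (L × (Fin n → ℤ)))
    (hBIind : ∀ c c', c ∈ BI → flip StepU c c' → c' ∈ BI)
    (hBIout : ∀ x ∈ {x : Fin n → ℤ | ((ℓ_out, x) : L × (Fin n → ℤ)) ∈ Itilde},
      ((ℓ_out, x) : L × (Fin n → ℤ)) ∈ BI)
    (hNotInv : ∃ c, (∃ x₀ ∈ Θ_init, Relation.ReflTransGen Step (ℓ_init, x₀) c) ∧ c ∉ BI) :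
    ∃ ρ : ℕ → L × (Fin n → ℤ),
      (∃ x ∈ Θ_init, ρ 0 = (ℓ_init, x)) ∧
      (∀ i, Step (ρ i) (ρ (i + 1))) ∧ (∀ i, (ρ i).1 ≠ ℓ_out) := by
  classical
  obtain ⟨c, ⟨x₀, hx₀, hreach⟩, hcBI⟩ := hNotInv
  -- any config in Itilde \ BI is not at ℓ_out
  have hAvoid : ∀ d : L × (Fin n → ℤ), d ∈ Itilde → d ∉ BI → d.1 ≠ ℓ_out := by
    intro d hdI hdB hdout
    exact hdB (by
      have : ((ℓ_out, d.2) : L × (Fin n → ℤ)) ∈ Itilde := by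
        rw [← hdout]; simpa using hdI
      have := hBIout d.2 this
      rwa [← hdout, Prod.mk.eta] at this)
  -- c is in Itilde
  have hcI : c ∈ Itilde := by
    have : ∀ d : L × (Fin n → ℤ), Relation.ReflTransGen Step (ℓ_init, x₀) d → d ∈ Itilde := by
      intro d hd
      induction hd with
      | refl => exact hIinit x₀ hx₀
      | tail _ hstep ih => exact hIind _ _ ih hstep
    exact this c hreach
  -- build an infinite run from c staying in Itilde \ BI
  have key : ∀ d : {d : L × (Fin n → ℤ) // d ∈ Itilde ∧ d ∉ BI},
      ∃ e : {d : L × (Fin n → ℤ) // d ∈ Itilde ∧ d ∉ BI}, Step d.1 e.1 := by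
    rintro ⟨d, hdI, hdB⟩
    obtain ⟨e, he⟩ := hProper d (hTotal d)
    have heS : Step d e := hUnder _ _ he
    have heI : e ∈ Itilde := hIind _ _ hdI heS
    have heB : e ∉ BI := fun h => hdB (hBIind e d h he)
    exact ⟨⟨e, heI, heB⟩, heS⟩
  choose f hf using key
  -- run from c
  have hrunc : ∃ σ : ℕ → L × (Fin n → ℤ), σ 0 = c ∧ (∀ i, Step (σ i) (σ (i + 1))) ∧
      ∀ i, (σ i).1 ≠ ℓ_out := by
    refine ⟨fun i => (f^[i] ⟨c, hcI, hcBI⟩).1, rfl, ?_, ?_⟩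
    · intro i
      have h1 : f^[i + 1] ⟨c, hcI, hcBI⟩ = f (f^[i] ⟨c, hcI, hcBI⟩) :=
        Function.iterate_succ_apply' f i _
      show Step (f^[i] ⟨c, hcI, hcBI⟩).1 (f^[i + 1] ⟨c, hcI, hcBI⟩).1
      rw [h1]; exact hf _
    · intro i
      exact hAvoid _ (f^[i] ⟨c, hcI, hcBI⟩).2.1 (f^[i] ⟨c, hcI, hcBI⟩).2.2
  -- prepend the finite reachability prefix, by head induction
  have main : ∀ d : L × (Fin n → ℤ), Relation.ReflTransGen Step d c →
      ∃ ρ : ℕ → L × (Fin n → ℤ), ρ 0 = d ∧ (∀ i, Step (ρ i) (ρ (i + 1))) ∧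
        ∀ i, (ρ i).1 ≠ ℓ_out := by
    intro d hd
    induction hd using Relation.ReflTransGen.head_induction_on with
    | refl => exact hrunc
    | head hstep _ ih =>
      rename_i a b _
      obtain ⟨ρ, hρ0, hρS, hρA⟩ := ih
      refine ⟨fun i => Nat.rec a (fun j _ => ρ j) i, rfl, ?_, ?_⟩
      · intro i
        cases i with
        | zero => simpa [hρ0] using hstep
        | succ j => exact hρS j
      · intro i
        cases i with
        | zero =>
          intro h
          exact hρA 0 (by rw [hρ0]; exact hOut a b h hstep)
        | succ j => exact hρA j
  obtain ⟨ρ, hρ0, hρS, hρA⟩ := main _ hreach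
  exact ⟨ρ, ⟨x₀, hx₀, hρ0⟩, hρS, hρA⟩
end

section
/- Soundness of ranking-function reachability witnesses (used in Section 5.4): Let Step be a relation on configurations, A and C⋄ sets of configurations, f : Conf → ℤ, and c ∈ C⋄. Suppose that for every configuration d ∈ C⋄ with d ∉ A there exists a configuration d' with Step d d', d' ∈ C⋄, f d' + 1 ≤ f d, and f d ≥ 0. Then some configuration in A is reachable from c, i.e. there exists a ∈ A with Relation.ReflTransGen Step c a. -/
/-- Soundness of ranking-function reachability witnesses (Section 5.4). -/
theorem ranking_reachability_witness_sound {L : Type*} {n : ℕ}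
    (Step : (L × (Fin n → ℤ)) → (L × (Fin n → ℤ)) → Prop)
    (A Cdia : Set (L × (Fin n → ℤ)))
    (f : (L × (Fin n → ℤ)) → ℤ)
    (c : L × (Fin n → ℤ)) (hc : c ∈ Cdia)
    (h : ∀ d ∈ Cdia, d ∉ A →
      ∃ d', Step d d' ∧ d' ∈ Cdia ∧ f d' + 1 ≤ f d ∧ 0 ≤ f d) :
    ∃ a ∈ A, Relation.ReflTransGen Step c a := by
  suffices H : ∀ (k : ℕ) (c : L × (Fin n → ℤ)), c ∈ Cdia → (f c).toNat ≤ k →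
      ∃ a ∈ A, Relation.ReflTransGen Step c a from H (f c).toNat c hc le_rfl
  intro k
  induction k with
  | zero =>
    intro c hc hk
    by_cases hA : c ∈ A
    · exact ⟨c, hA, Relation.ReflTransGen.refl⟩
    · obtain ⟨d', hs, hd', hf, hf0⟩ := h c hc hA
      by_cases hA' : d' ∈ A
      · exact ⟨d', hA', Relation.ReflTransGen.single hs⟩
      · obtain ⟨e, _, _, _, hf0'⟩ := h d' hd' hA'
        omega
  | succ k ih =>
    intro c hc hk
    by_cases hA : c ∈ A
    · exact ⟨c, hA, Relation.ReflTransGen.refl⟩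
    · obtain ⟨d', hs, hd', hf, hf0⟩ := h c hc hA
      obtain ⟨a, ha, hr⟩ := ih d' hd' (by omega)
      exact ⟨a, ha, Relation.ReflTransGen.head hs hr⟩
end

section
/- Semantic content of stronger relative completeness (Theorem 5.3): Let StepU be a proper under-approximation of Step, let Ĩ be a set of configurations inductive with respect to Step and containing all initial configurations, let Θ := {x : (ℓ_out, x) ∈ Ĩ}, and let BI be a set of configurations inductive with respect to flip StepU and containing every configuration (ℓ_out, x) with x ∈ Θ. Suppose moreover there are an initial configuration c, a set C⋄ of configurations with c ∈ C⋄, and f : Conf → ℤ such that every configuration d ∈ C⋄ with d ∈ BI has a Step-successor d' ∈ C⋄ with f d' + 1 ≤ f d and f d ≥ 0 (a reachability witness for the complement of BI). Then the original system is non-terminating, i.e. there exists a run from an initial configuration that never visits a configuration at location ℓ_out. -/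
/-- Semantic content of stronger relative completeness (Theorem 5.3). -/
theorem stronger_relative_completeness_semantic {L : Type*} {n : ℕ}
    (ℓ_init ℓ_out : L)
    (Θ_init : Set (Fin n → ℤ))
    (Step StepU : (L × (Fin n → ℤ)) → (L × (Fin n → ℤ)) → Prop)
    (hTotal : ∀ c, ∃ c', Step c c')
    (hOut : ∀ c c', c.1 = ℓ_out → Step c c' → c'.1 = ℓ_out)
    (hUnder : ∀ c c', StepU c c' → Step c c')
    (hProper : ∀ c, (∃ c', Step c c') → ∃ c', StepU c c')
    (Itilde : Set (L × (Fin n → ℤ)))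
    (hIind : ∀ c c', c ∈ Itilde → Step c c' → c' ∈ Itilde)
    (hIinit : ∀ x ∈ Θ_init, ((ℓ_init, x) : L × (Fin n → ℤ)) ∈ Itilde)
    (BI : Set (L × (Fin n → ℤ)))
    (hBIind : ∀ c c', c ∈ BI → flip StepU c c' → c' ∈ BI)
    (hBIout : ∀ x ∈ {x : Fin n → ℤ | ((ℓ_out, x) : L × (Fin n → ℤ)) ∈ Itilde},
      ((ℓ_out, x) : L × (Fin n → ℤ)) ∈ BI)
    (c : L × (Fin n → ℤ)) (hcInit : c.1 = ℓ_init ∧ c.2 ∈ Θ_init)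
    (Cdia : Set (L × (Fin n → ℤ))) (hcC : c ∈ Cdia)
    (f : (L × (Fin n → ℤ)) → ℤ)
    (hWitness : ∀ d ∈ Cdia, d ∈ BI →
      ∃ d', Step d d' ∧ d' ∈ Cdia ∧ f d' + 1 ≤ f d ∧ 0 ≤ f d) :
    ∃ ρ : ℕ → L × (Fin n → ℤ),
      (∃ x ∈ Θ_init, ρ 0 = (ℓ_init, x)) ∧
      (∀ i, Step (ρ i) (ρ (i + 1))) ∧ (∀ i, (ρ i).1 ≠ ℓ_out) := by

  classical
  -- descent lemma: no configuration in Itilde ∩ BI ∩ Cdia sits at ℓ_out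
  have descent : ∀ d : L × (Fin n → ℤ),
      ¬(d ∈ Itilde ∧ d ∈ BI ∧ d ∈ Cdia ∧ d.1 = ℓ_out) := by
    rintro d ⟨hId, hBd, hCd, hod⟩
    have step : ∀ e : L × (Fin n → ℤ),
        (e ∈ Itilde ∧ e ∈ BI ∧ e ∈ Cdia ∧ e.1 = ℓ_out) →
        ∃ e', (e' ∈ Itilde ∧ e' ∈ BI ∧ e' ∈ Cdia ∧ e'.1 = ℓ_out) ∧
          f e' + 1 ≤ f e ∧ 0 ≤ f e := by
      rintro e ⟨hI, hB, hC, ho⟩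
      obtain ⟨e', hs, hC', hf, hf0⟩ := hWitness e hC hB
      have hI' : e' ∈ Itilde := hIind e e' hI hs
      have ho' : e'.1 = ℓ_out := hOut e e' ho hs
      have heq : ((ℓ_out, e'.2) : L × (Fin n → ℤ)) = e' := by
        rw [← ho']
      have hB' : e' ∈ BI := by
        have := hBIout e'.2 (show ((ℓ_out, e'.2) : L × (Fin n → ℤ)) ∈ Itilde by
          rw [heq]; exact hI')
        rwa [heq] at this
      exact ⟨e', ⟨hI', hB', hC', ho'⟩, hf, hf0⟩
    choose nxt hmem hdec1 hnn1 using step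
    let S := {e : L × (Fin n → ℤ) // e ∈ Itilde ∧ e ∈ BI ∧ e ∈ Cdia ∧ e.1 = ℓ_out}
    let F : S → S := fun e => ⟨nxt e.1 e.2, hmem e.1 e.2⟩
    let g : ℕ → S := fun k => F^[k] ⟨d, hId, hBd, hCd, hod⟩
    have hdec : ∀ k, f (g (k + 1)).1 + 1 ≤ f (g k).1 := by
      intro k
      have h1 : g (k + 1) = F (g k) := Function.iterate_succ_apply' F k _
      rw [h1]
      exact hdec1 (g k).1 (g k).2
    have hnn : ∀ k, 0 ≤ f (g k).1 := fun k => hnn1 (g k).1 (g k).2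
    have hbound : ∀ k : ℕ, f (g k).1 ≤ f d - k := by
      intro k
      induction k with
      | zero => simp [g]
      | succ m ih =>
        have := hdec m
        push_cast
        omega
    have h1 := hbound ((f d).toNat + 1)
    have h0 := hnn ((f d).toNat + 1)
    have h2 : f d ≤ ((f d).toNat : ℤ) := Int.self_le_toNat _
    push_cast at h1
    omega
  -- main construction
  have step : ∀ e : L × (Fin n → ℤ),
      (e ∈ Itilde ∧ (e ∈ BI → e ∈ Cdia)) →
      ∃ e', Step e e' ∧ (e' ∈ Itilde ∧ (e' ∈ BI → e' ∈ Cdia)) := by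
    rintro e ⟨hI, hcond⟩
    by_cases hB : e ∈ BI
    · obtain ⟨e', hs, hC', hf, hf0⟩ := hWitness e (hcond hB) hB
      exact ⟨e', hs, hIind e e' hI hs, fun _ => hC'⟩
    · obtain ⟨e', hsU⟩ := hProper e (hTotal e)
      have hs := hUnder e e' hsU
      refine ⟨e', hs, hIind e e' hI hs, ?_⟩
      intro hB'
      exact absurd (hBIind e' e hB' hsU) hB
  choose nxt hstep hmem using step
  let T := {e : L × (Fin n → ℤ) // e ∈ Itilde ∧ (e ∈ BI → e ∈ Cdia)}
  let F : T → T := fun e => ⟨nxt e.1 e.2, hmem e.1 e.2⟩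
  have hcI : c ∈ Itilde := by
    have := hIinit c.2 hcInit.2
    rwa [← hcInit.1, Prod.mk.eta] at this
  let t0 : T := ⟨c, hcI, fun _ => hcC⟩
  refine ⟨fun k => (F^[k] t0).1, ⟨c.2, hcInit.2, ?_⟩, ?_, ?_⟩
  · simp only [Function.iterate_zero, id_eq]
    rw [← hcInit.1]
  · intro i
    show Step (F^[i] t0).1 (F^[i + 1] t0).1
    have h1 : F^[i + 1] t0 = F (F^[i] t0) := Function.iterate_succ_apply' F i t0
    rw [h1]
    exact hstep (F^[i] t0).1 (F^[i] t0).2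
  · intro i hout
    set t : T := F^[i] t0 with ht
    have hout' : t.1.1 = ℓ_out := hout
    have hI : t.1 ∈ Itilde := t.2.1
    have heq : ((ℓ_out, t.1.2) : L × (Fin n → ℤ)) = t.1 := by
      exact Prod.ext hout'.symm rfl
    have hB : t.1 ∈ BI := by
      have := hBIout t.1.2 (show ((ℓ_out, t.1.2) : L × (Fin n → ℤ)) ∈ Itilde by
        rw [heq]; exact hI)
      rwa [heq] at this
    exact descent t.1 ⟨hI, hB, t.2.2 hB, hout'⟩
end

section
/- Every recurrence set extends to an open recurrence set (claim in Section 4): If G is a recurrence set with respect to Step (a nonempty set of configurations containing a reachable configuration, in which every member has at least one Step-successor lying in G, and no member is at location ℓ_out), then there exists an open recurrence set G' with G ⊆ G', i.e. a recurrence set that additionally contains an initial configuration. -/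
/-- Every recurrence set extends to an open recurrence set (Section 4). -/
theorem recurrence_set_extends_to_open {L : Type*} {n : ℕ}
    (ℓ_init ℓ_out : L)
    (Θ_init : Set (Fin n → ℤ))
    (Step : (L × (Fin n → ℤ)) → (L × (Fin n → ℤ)) → Prop)
    (hOut : ∀ c c', c.1 = ℓ_out → Step c c' → c'.1 = ℓ_out)
    (G : Set (L × (Fin n → ℤ)))
    (hGne : G.Nonempty)
    (hGreach : ∃ c ∈ G, ∃ x ∈ Θ_init, Relation.ReflTransGen Step (ℓ_init, x) c)
    (hGsucc : ∀ c ∈ G, ∃ c', Step c c' ∧ c' ∈ G)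
    (hGout : ∀ c ∈ G, c.1 ≠ ℓ_out) :
    ∃ G' : Set (L × (Fin n → ℤ)), G ⊆ G' ∧
      G'.Nonempty ∧
      (∃ c ∈ G', ∃ x ∈ Θ_init, Relation.ReflTransGen Step (ℓ_init, x) c) ∧
      (∀ c ∈ G', ∃ c', Step c c' ∧ c' ∈ G') ∧
      (∀ c ∈ G', c.1 ≠ ℓ_out) ∧
      (∃ x ∈ Θ_init, ((ℓ_init, x) : L × (Fin n → ℤ)) ∈ G') := by
  obtain ⟨c₀, hc₀G, x, hxΘ, hpath⟩ := hGreach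
  have prop : ∀ {a b : L × (Fin n → ℤ)}, Relation.ReflTransGen Step a b →
      a.1 = ℓ_out → b.1 = ℓ_out := by
    intro a b h
    induction h with
    | refl => exact fun h => h
    | tail _ hs ih => exact fun h => hOut _ _ (ih h) hs
  refine ⟨G ∪ {c | Relation.ReflTransGen Step (ℓ_init, x) c ∧
      Relation.ReflTransGen Step c c₀}, Set.subset_union_left, ?_, ?_, ?_, ?_, ?_⟩
  · exact hGne.mono Set.subset_union_left
  · exact ⟨c₀, Or.inl hc₀G, x, hxΘ, hpath⟩
  · rintro c (hc | ⟨h1, h2⟩)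
    · obtain ⟨c', hs, hc'⟩ := hGsucc c hc
      exact ⟨c', hs, Or.inl hc'⟩
    · rcases h2.cases_head with rfl | ⟨d, hd, hdc⟩
      · obtain ⟨c', hs, hc'⟩ := hGsucc c hc₀G
        exact ⟨c', hs, Or.inl hc'⟩
      · exact ⟨d, hd, Or.inr ⟨h1.tail hd, hdc⟩⟩
  · rintro c (hc | ⟨h1, h2⟩)
    · exact hGout c hc
    · intro h
      exact hGout c₀ hc₀G (prop h2 h)
  · exact ⟨x, hxΘ, Or.inr ⟨Relation.ReflTransGen.refl, hpath⟩⟩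
end

section
/- Recurrence sets witness non-termination (used throughout Section 4): Let StepU be an under-approximation of Step and let G be a set of configurations such that G contains a configuration reachable in the original system, every c ∈ G has at least one StepU-successor lying in G, and no configuration of G is at location ℓ_out. Then the original system is non-terminating, i.e. there exists a run from an initial configuration (in Step) that never visits a configuration at location ℓ_out. -/
private lemma chain_of_rtg {α : Type*} {R : α → α → Prop} {a b : α}
    (h : Relation.ReflTransGen R a b) :
    ∃ k : ℕ, ∃ f : ℕ → α, f 0 = a ∧ f k = b ∧ ∀ i < k, R (f i) (f (i+1)) := by
  induction h with
  | refl => exact ⟨0, fun _ => a, rfl, rfl, fun i hi => absurd hi (Nat.not_lt_zero i)⟩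
  | @tail b' c' _ hbc ih =>
    obtain ⟨k, f, h0, hk, hstep⟩ := ih
    refine ⟨k+1, fun i => if i ≤ k then f i else c', ?_, ?_, ?_⟩
    · simp [h0]
    · simp
    · intro i hi
      rcases lt_or_eq_of_le (Nat.lt_succ_iff.mp hi) with h1 | h1
      · dsimp only
        rw [if_pos (Nat.le_of_lt h1), if_pos (Nat.succ_le_of_lt h1)]
        exact hstep i h1
      · subst h1
        simp only [le_refl, if_pos, Nat.not_succ_le_self, if_neg]
        exact hk ▸ hbc

/-- Recurrence sets witness non-termination (Section 4). -/
theorem recurrence_set_witnesses_nontermination {L : Type*} {n : ℕ}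
    (ℓ_init ℓ_out : L)
    (Θ_init : Set (Fin n → ℤ))
    (Step StepU : (L × (Fin n → ℤ)) → (L × (Fin n → ℤ)) → Prop)
    (hOut : ∀ c c', c.1 = ℓ_out → Step c c' → c'.1 = ℓ_out)
    (hUnder : ∀ c c', StepU c c' → Step c c')
    (G : Set (L × (Fin n → ℤ)))
    (hGreach : ∃ c ∈ G, ∃ x ∈ Θ_init, Relation.ReflTransGen Step (ℓ_init, x) c)
    (hGsucc : ∀ c ∈ G, ∃ c', StepU c c' ∧ c' ∈ G)
    (hGout : ∀ c ∈ G, c.1 ≠ ℓ_out) :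
    ∃ ρ : ℕ → L × (Fin n → ℤ),
      (∃ x ∈ Θ_init, ρ 0 = (ℓ_init, x)) ∧
      (∀ i, Step (ρ i) (ρ (i + 1))) ∧ (∀ i, (ρ i).1 ≠ ℓ_out) := by
  obtain ⟨c, hcG, x, hx, hreach⟩ := hGreach
  obtain ⟨k, f, hf0, hfk, hfstep⟩ := chain_of_rtg hreach
  -- infinite run inside G starting at c
  have F : ∀ p : {c // c ∈ G}, {c' : {c // c ∈ G} // StepU p.1 c'.1} := by
    intro p
    choose c' h1 h2 using hGsucc p.1 p.2
    exact ⟨⟨c', h2⟩, h1⟩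
  let g : ℕ → {c // c ∈ G} := fun m => Nat.rec ⟨c, hcG⟩ (fun _ p => (F p).1) m
  have hgstep : ∀ m, StepU (g m).1 (g (m+1)).1 := fun m => (F (g m)).2
  have hg0 : g 0 = ⟨c, hcG⟩ := rfl
  -- combined run
  refine ⟨fun i => if i ≤ k then f i else (g (i - k)).1, ⟨x, hx, by simp [hf0]⟩, ?_, ?_⟩
  · intro i
    rcases lt_trichotomy i k with h1 | h1 | h1
    · dsimp only
      rw [if_pos (Nat.le_of_lt h1), if_pos (Nat.succ_le_of_lt h1)]
      exact hfstep i h1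
    · subst h1
      dsimp only
      rw [if_pos (le_refl i), if_neg (Nat.not_succ_le_self i), Nat.succ_sub le_rfl,
        Nat.sub_self]
      have h4 := hUnder _ _ (hgstep 0)
      rw [hg0] at h4
      exact hfk ▸ h4
    · have h2 : ¬ i ≤ k := not_le.mpr h1
      have h3 : ¬ i + 1 ≤ k := by omega
      simp only [h2, h3, if_neg]
      have : i + 1 - k = (i - k) + 1 := by omega
      rw [this]
      exact hUnder _ _ (hgstep (i - k))
  · -- no ℓ_out anywhere
    intro i
    rcases le_or_gt i k with h1 | h1
    · simp only [h1, if_pos]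
      -- if f i were at ℓ_out, then f k would be, contradicting c ∈ G
      intro hbad
      have hmono : ∀ j, i ≤ j → j ≤ k → (f j).1 = ℓ_out := by
        intro j
        induction j with
        | zero => intro hij _; exact Nat.le_zero.mp hij ▸ hbad
        | succ m ihm =>
          intro hij hjk
          rcases Nat.lt_or_ge i (m+1) with h | h
          · exact hOut _ _ (ihm (Nat.lt_succ_iff.mp h) (le_of_lt hjk))
              (hfstep m (lt_of_lt_of_le (Nat.lt_succ_self m) hjk))
          · exact (le_antisymm hij h) ▸ hbad
      exact hGout c hcG (hfk ▸ hmono k h1 le_rfl)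
    · simp only [not_le.mpr h1, if_neg]
      exact hGout _ (g (i - k)).2
end

section
/- Non-termination of the running example (Examples 1.1, 4.4, 5.4.1): In the concrete transition system of the program 'while x ≥ 9 do x := ndet(); y := 10·x; while x ≤ y do x := x + 1 od od', there exists a run starting at the configuration (0, (9, 0)) (location ℓ₀ with x = 9, y = 0) that never visits a configuration at the terminal location 5, i.e. there exists ρ : ℕ → Conf with ρ 0 = (0, (9, 0)), Step (ρ i) (ρ (i+1)) for all i, and (ρ i).1 ≠ 5 for all i. -/
/-- Step relation of the running example
`while x ≥ 9 do x := ndet(); y := 10·x; while x ≤ y do x := x + 1 od od`. -/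
inductive RunningStep : (Fin 6 × (ℤ × ℤ)) → (Fin 6 × (ℤ × ℤ)) → Prop
  | outer_enter {x y : ℤ} (h : x ≥ 9) : RunningStep (0, (x, y)) (1, (x, y))
  | outer_exit {x y : ℤ} (h : x < 9) : RunningStep (0, (x, y)) (5, (x, y))
  | ndet {x y : ℤ} (v : ℤ) : RunningStep (1, (x, y)) (2, (v, y))
  | assign {x y : ℤ} : RunningStep (2, (x, y)) (3, (x, 10 * x))
  | inner_enter {x y : ℤ} (h : x ≤ y) : RunningStep (3, (x, y)) (4, (x, y))
  | inner_exit {x y : ℤ} (h : x > y) : RunningStep (3, (x, y)) (0, (x, y))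
  | inc {x y : ℤ} : RunningStep (4, (x, y)) (3, (x + 1, y))
  | term {x y : ℤ} : RunningStep (5, (x, y)) (5, (x, y))

def RInv : Fin 6 × (ℤ × ℤ) → Prop := fun c =>
  (c.1 = 0 ∧ c.2.1 ≥ 9) ∨ (c.1 = 1) ∨ (c.1 = 2 ∧ c.2.1 ≥ 1) ∨
  (c.1 = 3 ∧ c.2.1 ≤ c.2.2 + 1 ∧ c.2.2 ≥ 8) ∨
  (c.1 = 4 ∧ c.2.1 ≤ c.2.2 ∧ c.2.2 ≥ 8)

lemma rinv_step : ∀ c, RInv c → ∃ c', RunningStep c c' ∧ RInv c' := by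
  rintro ⟨ℓ, x, y⟩ h
  rcases h with ⟨h0, hx⟩ | h1 | ⟨h2, hx⟩ | ⟨h3, hx, hy⟩ | ⟨h4, hx, hy⟩
  · subst h0
    exact ⟨(1, (x, y)), RunningStep.outer_enter hx, Or.inr (Or.inl rfl)⟩
  · subst h1
    exact ⟨(2, (9, y)), RunningStep.ndet 9, Or.inr (Or.inr (Or.inl ⟨rfl, by norm_num⟩))⟩
  · subst h2
    exact ⟨(3, (x, 10 * x)), RunningStep.assign,
      Or.inr (Or.inr (Or.inr (Or.inl ⟨rfl, by dsimp only at hx ⊢; linarith, by dsimp only at hx ⊢; linarith⟩)))⟩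
  · subst h3
    by_cases hle : x ≤ y
    · exact ⟨(4, (x, y)), RunningStep.inner_enter hle,
        Or.inr (Or.inr (Or.inr (Or.inr ⟨rfl, hle, hy⟩)))⟩
    · exact ⟨(0, (x, y)), RunningStep.inner_exit (by omega),
        Or.inl ⟨rfl, by dsimp only at hx hy ⊢; omega⟩⟩
  · subst h4
    exact ⟨(3, (x + 1, y)), RunningStep.inc,
      Or.inr (Or.inr (Or.inr (Or.inl ⟨rfl, by dsimp only at hx ⊢; omega, hy⟩)))⟩

lemma rinv_ne5 : ∀ c, RInv c → c.1 ≠ 5 := by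
  rintro ⟨ℓ, x, y⟩ h
  rcases h with ⟨h, -⟩ | h | ⟨h, -⟩ | ⟨h, -⟩ | ⟨h, -⟩ <;> simp_all

/-- Non-termination of the running example (Examples 1.1, 4.4, 5.4.1). -/
theorem running_example_nonterminating :
    ∃ ρ : ℕ → Fin 6 × (ℤ × ℤ), ρ 0 = (0, (9, 0)) ∧
      (∀ i, RunningStep (ρ i) (ρ (i + 1))) ∧ (∀ i, (ρ i).1 ≠ 5) := by
  classical
  let f : {c // RInv c} → {c // RInv c} := fun c =>
    ⟨(rinv_step c.1 c.2).choose, (rinv_step c.1 c.2).choose_spec.2⟩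
  have hf : ∀ c : {c // RInv c}, RunningStep c.1 (f c).1 := fun c =>
    (rinv_step c.1 c.2).choose_spec.1
  have hstart : RInv (0, (9, 0)) := Or.inl ⟨rfl, by norm_num⟩
  let σ : ℕ → {c // RInv c} := fun n => f^[n] ⟨(0, (9, 0)), hstart⟩
  refine ⟨fun n => (σ n).1, rfl, fun i => ?_, fun i => rinv_ne5 _ (σ i).2⟩
  have h1 : σ (i + 1) = f (σ i) := Function.iterate_succ_apply' f i _
  show RunningStep (σ i).1 (σ (i + 1)).1
  rw [h1]
  exact hf (σ i)
end

section
/- No diverging configuration in the running example (Example 2.3): In the concrete transition system of the program 'while x ≥ 9 do x := ndet(); y := 10·x; while x ≤ y do x := x + 1 od od', for every configuration (ℓ, (x, y)) some configuration at the terminal location 5 is reachable from it, i.e. there exist x', y' : ℤ with Relation.ReflTransGen Step (ℓ, (x, y)) (5, (x', y')). -/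
private lemma run_from1 (x y : ℤ) :
    Relation.ReflTransGen RunningStep (1, (x, y)) (5, (1, 0)) := by
  have h1 : RunningStep (1, (x, y)) (2, (0, y)) := RunningStep.ndet 0
  have h2 : RunningStep (2, (0, y)) (3, (0, 0)) := by
    have := @RunningStep.assign 0 y; simpa using this
  have h3 : RunningStep (3, (0, 0)) (4, (0, 0)) := RunningStep.inner_enter le_rfl
  have h4 : RunningStep (4, (0, 0)) (3, (1, 0)) := by
    have := @RunningStep.inc 0 0; simpa using this
  have h5 : RunningStep (3, (1, 0)) (0, (1, 0)) := RunningStep.inner_exit one_pos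
  have h6 : RunningStep (0, (1, 0)) (5, (1, 0)) := RunningStep.outer_exit (by norm_num)
  exact .tail (.tail (.tail (.tail (.tail (.single h1) h2) h3) h4) h5) h6

private lemma run_from0 (x y : ℤ) : ∃ x' y' : ℤ,
    Relation.ReflTransGen RunningStep (0, (x, y)) (5, (x', y')) := by
  by_cases h : x < 9
  · exact ⟨x, y, Relation.ReflTransGen.single (RunningStep.outer_exit h)⟩
  · exact ⟨1, 0, .trans (.single (RunningStep.outer_enter (by omega))) (run_from1 x y)⟩

private lemma run_from3 (x y : ℤ) : ∃ x' y' : ℤ,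
    Relation.ReflTransGen RunningStep (3, (x, y)) (5, (x', y')) := by
  by_cases h : x ≤ y
  · have hlt : (y + 1 - (x + 1)).toNat < (y + 1 - x).toNat := by omega
    obtain ⟨a, b, hr⟩ := run_from3 (x + 1) y
    exact ⟨a, b, .trans (.tail (.single (RunningStep.inner_enter h)) RunningStep.inc) hr⟩
  · obtain ⟨a, b, hr⟩ := run_from0 x y
    exact ⟨a, b, .trans (.single (RunningStep.inner_exit (by omega))) hr⟩
termination_by (y + 1 - x).toNat
decreasing_by exact hlt

/-- No diverging configuration in the running example (Example 2.3). -/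
theorem running_example_no_diverging_configuration :
    ∀ (ℓ : Fin 6) (x y : ℤ), ∃ x' y' : ℤ,
      Relation.ReflTransGen RunningStep (ℓ, (x, y)) (5, (x', y')) := by
  intro ℓ x y
  fin_cases ℓ
  · exact run_from0 x y
  · exact ⟨1, 0, run_from1 x y⟩
  · obtain ⟨a, b, hr⟩ := run_from3 x (10 * x)
    exact ⟨a, b, .trans (.single RunningStep.assign) hr⟩
  · exact run_from3 x y
  · obtain ⟨a, b, hr⟩ := run_from3 (x + 1) y
    exact ⟨a, b, .trans (.single RunningStep.inc) hr⟩
  · exact ⟨x, y, .refl⟩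
end

section
/- Non-termination of the program of Figure 2 (Example 5.2): In the concrete transition system below, there exists a run starting at the initial configuration (0, (0, 0, 0)) (location ℓ₀ with n = 0, b = 0, u = 0) that never visits a configuration at the terminal location 10, i.e. there exists ρ : ℕ → Conf with ρ 0 = (0, (0, 0, 0)), Step (ρ i) (ρ (i+1)) for all i, and (ρ i).1 ≠ 10 for all i. -/
/-- Step relation of the program of Figure 2. -/
inductive Fig2Step : (Fin 11 × (ℤ × ℤ × ℤ)) → (Fin 11 × (ℤ × ℤ × ℤ)) → Prop
  | outer_enter {n b u : ℤ} (hb : b = 0) (hn : n ≤ 99) :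
      Fig2Step (0, (n, b, u)) (1, (n, b, u))
  | outer_exit {n b u : ℤ} (h : b ≠ 0 ∨ n > 99) :
      Fig2Step (0, (n, b, u)) (10, (n, b, u))
  | ndet {n b u : ℤ} (v : ℤ) : Fig2Step (1, (n, b, u)) (2, (n, b, v))
  | if_neg {n b u : ℤ} (h : u ≤ -1) : Fig2Step (2, (n, b, u)) (3, (n, b, u))
  | if_zero {n b u : ℤ} (h : u = 0) : Fig2Step (2, (n, b, u)) (4, (n, b, u))
  | if_pos {n b u : ℤ} (h : u ≥ 1) : Fig2Step (2, (n, b, u)) (5, (n, b, u))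
  | set_neg {n b u : ℤ} : Fig2Step (3, (n, b, u)) (6, (n, -1, u))
  | set_zero {n b u : ℤ} : Fig2Step (4, (n, b, u)) (6, (n, 0, u))
  | set_pos {n b u : ℤ} : Fig2Step (5, (n, b, u)) (6, (n, 1, u))
  | inc {n b u : ℤ} : Fig2Step (6, (n, b, u)) (7, (n + 1, b, u))
  | inner_enter {n b u : ℤ} (hn : n ≥ 100) (hb : b ≥ 1) :
      Fig2Step (7, (n, b, u)) (8, (n, b, u))
  | inner_skip {n b u : ℤ} (h : n < 100 ∨ b < 1) :
      Fig2Step (7, (n, b, u)) (0, (n, b, u))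
  | skip₁ {n b u : ℤ} : Fig2Step (8, (n, b, u)) (9, (n, b, u))
  | skip₂ {n b u : ℤ} : Fig2Step (9, (n, b, u)) (8, (n, b, u))
  | term {n b u : ℤ} : Fig2Step (10, (n, b, u)) (10, (n, b, u))

/-- The witnessing run. -/
def fig2Run (i : ℕ) : Fin 11 × (ℤ × ℤ × ℤ) :=
  if i < 596 then
    if i % 6 = 0 then (0, ((i / 6 : ℕ), 0, 0))
    else if i % 6 = 1 then (1, ((i / 6 : ℕ), 0, 0))
    else if i % 6 = 2 then (2, ((i / 6 : ℕ), 0, 0))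
    else if i % 6 = 3 then (4, ((i / 6 : ℕ), 0, 0))
    else if i % 6 = 4 then (6, ((i / 6 : ℕ), 0, 0))
    else (7, ((i / 6 : ℕ) + 1, 0, 0))
  else if i = 596 then (2, (99, 0, 1))
  else if i = 597 then (5, (99, 0, 1))
  else if i = 598 then (6, (99, 1, 1))
  else if i = 599 then (7, (100, 1, 1))
  else if i % 2 = 0 then (8, (100, 1, 1)) else (9, (100, 1, 1))

/-- Non-termination of the program of Figure 2 (Example 5.2). -/
theorem fig2_nonterminating :
    ∃ ρ : ℕ → Fin 11 × (ℤ × ℤ × ℤ), ρ 0 = (0, (0, 0, 0)) ∧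
      (∀ i, Fig2Step (ρ i) (ρ (i + 1))) ∧ (∀ i, (ρ i).1 ≠ 10) := by
  refine ⟨fig2Run, by simp [fig2Run], ?_, ?_⟩
  · intro i
    by_cases h1 : i < 595
    · have h2 : i < 596 := by omega
      have h3 : i + 1 < 596 := by omega
      have hr : i % 6 = 0 ∨ i % 6 = 1 ∨ i % 6 = 2 ∨ i % 6 = 3 ∨ i % 6 = 4 ∨ i % 6 = 5 := by
        omega
      rcases hr with hr | hr | hr | hr | hr | hr
      all_goals {
        first
        | (have hr' : (i + 1) % 6 = i % 6 + 1 := by omega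
           have hq : (i + 1) / 6 = i / 6 := by omega
           simp only [fig2Run, h2, h3, if_pos, if_true, hr, hr', hq]
           norm_num
           first
           | (apply Fig2Step.outer_enter rfl
              have : i / 6 ≤ 99 := by omega
              exact_mod_cast this)
           | exact Fig2Step.ndet 0
           | exact Fig2Step.if_zero rfl
           | exact Fig2Step.set_zero
           | exact Fig2Step.inc)
        | (have hr' : (i + 1) % 6 = 0 := by omega
           have hq : (i + 1) / 6 = i / 6 + 1 := by omega
           simp only [fig2Run, h2, h3, if_pos, if_true, hr, hr', hq]
           norm_num
           apply Fig2Step.inner_skip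
           left
           have : i / 6 + 1 < 100 := by omega
           exact_mod_cast this) }
    · by_cases h5 : i = 595
      · subst h5
        have : (595 : ℕ) % 6 = 1 := by norm_num
        simp only [fig2Run]
        norm_num
        exact Fig2Step.ndet 1
      by_cases h6 : i = 596
      · subst h6; simp only [fig2Run]; norm_num
        exact Fig2Step.if_pos (by norm_num)
      by_cases h7 : i = 597
      · subst h7; simp only [fig2Run]; norm_num; exact Fig2Step.set_pos
      by_cases h8 : i = 598
      · subst h8; simp only [fig2Run]; norm_num
        exact (show (99:ℤ) + 1 = 100 by norm_num) ▸ Fig2Step.inc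
      by_cases h9 : i = 599
      · subst h9; simp only [fig2Run]; norm_num
        exact Fig2Step.inner_enter (by norm_num) (by norm_num)
      · have hge : ¬ i < 596 := by omega
        have hge' : ¬ i + 1 < 596 := by omega
        have e6 : i + 1 ≠ 596 := by omega
        have e7 : i + 1 ≠ 597 := by omega
        have e8 : i + 1 ≠ 598 := by omega
        have e9 : i + 1 ≠ 599 := by omega
        by_cases hp : i % 2 = 0
        · have hp' : ¬ (i + 1) % 2 = 0 := by omega
          simp only [fig2Run, hge, hge', hp, hp', h5, h6, h7, h8, h9, e6, e7, e8, e9,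
            if_false, if_true, if_neg, if_pos]
          exact Fig2Step.skip₁
        · have hp' : (i + 1) % 2 = 0 := by omega
          simp only [fig2Run, hge, hge', hp, hp', h5, h6, h7, h8, h9, e6, e7, e8, e9,
            if_false, if_true, if_neg, if_pos]
          exact Fig2Step.skip₂
  · intro i
    unfold fig2Run
    split_ifs <;> simp
end

section
/- Termination characterization for the aperiodic example (Appendix C): In the concrete transition system of the program 'while x ≥ 1 do y := 10·x; while x ≤ y do x := x + 1 od od', for all x₀, y₀ : ℤ: if x₀ ≤ 0 then every run from (0, (x₀, y₀)) visits a configuration at the terminal location 4; and if x₀ ≥ 1 then every run from (0, (x₀, y₀)) never visits a configuration at location 4. (In particular the system has a non-terminating run from every initial configuration with x₀ ≥ 1.) -/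
/-- Step relation of the aperiodic example
`while x ≥ 1 do y := 10·x; while x ≤ y do x := x + 1 od od`. -/
inductive AperiodicStep : (Fin 5 × (ℤ × ℤ)) → (Fin 5 × (ℤ × ℤ)) → Prop
  | outer_enter {x y : ℤ} (h : x ≥ 1) : AperiodicStep (0, (x, y)) (1, (x, y))
  | outer_exit {x y : ℤ} (h : x ≤ 0) : AperiodicStep (0, (x, y)) (4, (x, y))
  | assign {x y : ℤ} : AperiodicStep (1, (x, y)) (2, (x, 10 * x))
  | inner_enter {x y : ℤ} (h : x ≤ y) : AperiodicStep (2, (x, y)) (3, (x, y))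
  | inner_exit {x y : ℤ} (h : x > y) : AperiodicStep (2, (x, y)) (0, (x, y))
  | inc {x y : ℤ} : AperiodicStep (3, (x, y)) (2, (x + 1, y))
  | term {x y : ℤ} : AperiodicStep (4, (x, y)) (4, (x, y))

lemma aperiodic_exit {x y : ℤ} {c : Fin 5 × (ℤ × ℤ)}
    (h : AperiodicStep (0, (x, y)) c) (hx : x ≤ 0) : c.1 = 4 := by
  generalize hs : ((0 : Fin 5), (x, y)) = s at h
  cases h <;> simp_all <;> omega

lemma aperiodic_invariant {c c' : Fin 5 × (ℤ × ℤ)}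
    (h : AperiodicStep c c') (hc : c.1 ≠ 4 ∧ 1 ≤ c.2.1) :
    c'.1 ≠ 4 ∧ 1 ≤ c'.2.1 := by
  cases h <;> simp_all <;> omega

/-- Termination characterization for the aperiodic example (Appendix C). -/
theorem aperiodic_example_termination_characterization :
    ∀ x₀ y₀ : ℤ,
      (x₀ ≤ 0 → ∀ ρ : ℕ → Fin 5 × (ℤ × ℤ), ρ 0 = (0, (x₀, y₀)) →
        (∀ i, AperiodicStep (ρ i) (ρ (i + 1))) → ∃ i, (ρ i).1 = 4) ∧
      (x₀ ≥ 1 → ∀ ρ : ℕ → Fin 5 × (ℤ × ℤ), ρ 0 = (0, (x₀, y₀)) →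
        (∀ i, AperiodicStep (ρ i) (ρ (i + 1))) → ∀ i, (ρ i).1 ≠ 4) := by
  intro x₀ y₀
  constructor
  · intro hx ρ h0 hstep
    exact ⟨1, aperiodic_exit (h0 ▸ hstep 0) hx⟩
  · intro hx ρ h0 hstep i
    have : ∀ i, (ρ i).1 ≠ 4 ∧ 1 ≤ (ρ i).2.1 := by
      intro j
      induction j with
      | zero => rw [h0]; refine ⟨?_, hx⟩ <;> simp
      | succ n ih => exact aperiodic_invariant (hstep n) ih
    exact (this i).1
end

section
/- Aperiodicity of all non-terminating runs in the aperiodic example (Appendix C): In the concrete transition system of the program 'while x ≥ 1 do y := 10·x; while x ≤ y do x := x + 1 od od', for all x₀, y₀ : ℤ with x₀ ≥ 1, every run ρ from (0, (x₀, y₀)) is not eventually periodic: there exist no k : ℕ and p : ℕ with p > 0 such that ρ (i + p) = ρ i for all i ≥ k. Equivalently, every such run visits infinitely many pairwise distinct configurations. -/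
lemma aperiodic_step_mono {a b : Fin 5 × (ℤ × ℤ)} (h : AperiodicStep a b) :
    a.2.1 ≤ b.2.1 := by
  cases h <;> simp

/-- Aperiodicity of all non-terminating runs in the aperiodic example
(Appendix C). -/
theorem aperiodic_example_runs_not_eventually_periodic :
    ∀ x₀ y₀ : ℤ, x₀ ≥ 1 →
      ∀ ρ : ℕ → Fin 5 × (ℤ × ℤ), ρ 0 = (0, (x₀, y₀)) →
        (∀ i, AperiodicStep (ρ i) (ρ (i + 1))) →
        ¬ ∃ (k p : ℕ), p > 0 ∧ ∀ i ≥ k, ρ (i + p) = ρ i := by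
  intro x₀ y₀ hx₀ ρ h0 hs
  rintro ⟨k, p, hp, hper⟩
  -- x-coordinate is monotone
  have mono : ∀ i j : ℕ, i ≤ j → (ρ i).2.1 ≤ (ρ j).2.1 := by
    intro i j hij
    induction j with
    | zero => simp [Nat.le_zero.mp hij]
    | succ n ih =>
      rcases Nat.lt_or_ge i (n+1) with h | h
      · exact le_trans (ih (by omega)) (aperiodic_step_mono (hs n))
      · have : i = n + 1 := by omega
        simp [this]
  -- x ≥ 1 always
  have hx1 : ∀ i, (ρ i).2.1 ≥ 1 := by
    intro i
    have := mono 0 i (Nat.zero_le _)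
    rw [h0] at this; simpa using le_trans hx₀ this
  -- x is constant from k on
  have hconst : ∀ i, k ≤ i → (ρ (i+1)).2.1 = (ρ i).2.1 := by
    intro i hi
    have h1 := mono i (i+1) (by omega)
    have h2 := mono (i+1) (i+p) (by omega)
    have h3 : (ρ (i+p)).2.1 = (ρ i).2.1 := by rw [hper i hi]
    omega
  -- location 3 is impossible from k on
  have h3 : ∀ i, k ≤ i → (ρ i).1 ≠ 3 := by
    intro i hi h
    have hst := hs i
    have hc := hconst i hi
    rcases hρ : ρ i with ⟨ℓ, x, y⟩
    rcases hρ' : ρ (i+1) with ⟨ℓ', x', y'⟩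
    rw [hρ] at hst h hc
    rw [hρ'] at hst hc
    cases hst <;> simp_all
  -- location 1 is impossible from k on
  have h1 : ∀ i, k ≤ i → (ρ i).1 ≠ 1 := by
    intro i hi h
    have hst := hs i
    rcases hρ : ρ i with ⟨ℓ, x, y⟩
    rcases hρ' : ρ (i+1) with ⟨ℓ', x', y'⟩
    rw [hρ] at hst h
    rw [hρ'] at hst
    simp at h; subst h
    cases hst
    -- ρ (i+1) = (2, (x, 10*x))
    have hst2 := hs (i+1)
    have hx := hx1 (i+1)
    rcases hρ'' : ρ (i+2) with ⟨ℓ'', x'', y''⟩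
    rw [hρ'] at hst2 hx
    rw [show i+1+1 = i+2 from rfl, hρ''] at hst2
    simp at hx
    cases hst2 with
    | inner_enter hle =>
      exact h3 (i+2) (by omega) (by rw [hρ'']) 
    | inner_exit hgt => omega
  -- location 0 is impossible from k on
  have h0' : ∀ i, k ≤ i → (ρ i).1 ≠ 0 := by
    intro i hi h
    have hst := hs i
    have hx := hx1 i
    rcases hρ : ρ i with ⟨ℓ, x, y⟩
    rcases hρ' : ρ (i+1) with ⟨ℓ', x', y'⟩
    rw [hρ] at hst h hx
    rw [hρ'] at hst
    simp at h hx; subst h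
    cases hst with
    | outer_enter _ => exact h1 (i+1) (by omega) (by rw [hρ'])
    | outer_exit hle => omega
  -- location 4 is impossible (always)
  have h4 : ∀ i, (ρ i).1 ≠ 4 := by
    intro i
    induction i with
    | zero => simp [h0]
    | succ n ih =>
      have hst := hs n
      have hx := hx1 n
      rcases hρ : ρ n with ⟨ℓ, x, y⟩
      rcases hρ' : ρ (n+1) with ⟨ℓ', x', y'⟩
      rw [hρ] at hst ih hx
      rw [hρ'] at hst
      simp at hx
      cases hst <;> simp_all <;> omega
  -- location 2 is impossible from k on
  have h2 : ∀ i, k ≤ i → (ρ i).1 ≠ 2 := by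
    intro i hi h
    have hst := hs i
    rcases hρ : ρ i with ⟨ℓ, x, y⟩
    rcases hρ' : ρ (i+1) with ⟨ℓ', x', y'⟩
    rw [hρ] at hst h
    rw [hρ'] at hst
    simp at h; subst h
    cases hst with
    | inner_enter _ => exact h3 (i+1) (by omega) (by rw [hρ'])
    | inner_exit _ => exact h0' (i+1) (by omega) (by rw [hρ'])
  -- exhaust Fin 5
  have e0 := h0' k le_rfl
  have e1 := h1 k le_rfl
  have e2 := h2 k le_rfl
  have e3 := h3 k le_rfl
  have e4 := h4 k
  obtain ⟨l, hl⟩ : ∃ l, (ρ k).1 = l := ⟨_, rfl⟩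
  rw [hl] at e0 e1 e2 e3 e4
  fin_cases l <;> simp_all
end
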